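/- Let Γ ≤ S_m (m ≥ 3) have property T_j, i.e., property T_{i,j} for all i ∈ {1,...,m}. Then two m-edge-coloured graphs G₁ and G₂ on the same underlying graph are Γ-switch equivalent. More generally, G₁ and G₂ are Γ-switch equivalent if and only if their underlying graphs are isomorphic. -/

import Mathlib

/-- Switching at vertex `x` with respect to a permutation `π` of colours: the colour
of each edge incident to `x` is replaced by its image under `π`. -/
def switchAt {V C : Type} [DecidableEq V] (σ : Sym2 V → C) (x : V)
    (π : Equiv.Perm C) : Sym2 V → C :=
  fun e => if x ∈ e then π (σ e) else σ e

/-- Apply a Γ-switching sequence (list of (vertex, element of Γ) pairs, left to right). -/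
def switchSeq {V C : Type} [DecidableEq V] {Γ : Subgroup (Equiv.Perm C)}
    (σ : Sym2 V → C) (S : List (V × Γ)) : Sym2 V → C :=
  S.foldl (fun τ p => switchAt τ p.1 (p.2 : Equiv.Perm C)) σ

section Aux

variable {V C : Type} [DecidableEq V] {Γ : Subgroup (Equiv.Perm C)}

/-- The pointwise action of a single switch on the colour of a fixed edge. -/
def stepAt (p : V × Γ) (e : Sym2 V) (c : C) : C :=
  if p.1 ∈ e then (p.2 : Equiv.Perm C) c else c

lemma switchSeq_eq_foldl (S : List (V × Γ)) (σ : Sym2 V → C) (e : Sym2 V) :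
    switchSeq σ S e = S.foldl (fun c p => stepAt p e c) (σ e) := by
  induction S generalizing σ with
  | nil => rfl
  | cons p S ih =>
      show switchSeq (switchAt σ p.1 (p.2 : Equiv.Perm C)) S e = _
      rw [ih]
      rfl

lemma switchSeq_congr {S : List (V × Γ)} {σ τ : Sym2 V → C} {e : Sym2 V}
    (h : σ e = τ e) : switchSeq σ S e = switchSeq τ S e := by
  rw [switchSeq_eq_foldl, switchSeq_eq_foldl, h]

lemma switchSeq_append (S T : List (V × Γ)) (σ : Sym2 V → C) :
    switchSeq σ (S ++ T) = switchSeq (switchSeq σ S) T := by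
  simp [switchSeq, List.foldl_append]

/-- Inverse of a switching sequence. -/
def invSeq (S : List (V × Γ)) : List (V × Γ) :=
  (S.map (fun p => (p.1, p.2⁻¹))).reverse

lemma switchSeq_invSeq (S : List (V × Γ)) (σ : Sym2 V → C) (e : Sym2 V) :
    switchSeq (switchSeq σ S) (invSeq S) e = σ e := by
  rw [switchSeq_eq_foldl, switchSeq_eq_foldl]
  induction S generalizing σ with
  | nil => rfl
  | cons p S ih =>
      have : (invSeq (p :: S) : List (V × Γ))
          = invSeq S ++ [(p.1, p.2⁻¹)] := by
        simp [invSeq]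
      rw [this, List.foldl_append]
      have h2 := ih (switchAt σ p.1 (p.2 : Equiv.Perm C))
      have hval : (switchAt σ p.1 (p.2 : Equiv.Perm C)) e = stepAt p e (σ e) := rfl
      rw [hval] at h2
      simp only [List.foldl_cons, List.foldl_nil]
      rw [h2]
      unfold stepAt
      by_cases hmem : p.1 ∈ e <;> simp [hmem]

end Aux

section Main

variable {V : Type} [DecidableEq V] {m : ℕ} {Γ : Subgroup (Equiv.Perm (Fin m))} {j : Fin m}

lemma fourSwitch
    (hT : ∀ i : Fin m, ∃ α β : Equiv.Perm (Fin m), α ∈ Γ ∧ β ∈ Γ ∧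
      ∃ k : Fin m, α i = j ∧ α k = k ∧ β j = k)
    (σ : Sym2 V → Fin m) (u v : V) (huv : u ≠ v) :
    ∃ S : List (V × Γ),
      switchSeq σ S s(u, v) = j ∧
      ∀ e : Sym2 V, e ≠ s(u, v) → σ e = j → switchSeq σ S e = j := by
  obtain ⟨α₁, β₁, hα₁, hβ₁, k₁, hij, -, -⟩ := hT (σ s(u, v))
  obtain ⟨α₂, β₂, hα₂, hβ₂, k₂, hdj, hk₂, hjk₂⟩ := hT (α₁ j)
  obtain ⟨α₃, β₃, hα₃, hβ₃, k₃, hk₂j, -, -⟩ := hT k₂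
  refine ⟨[(u, ⟨α₁, hα₁⟩), (v, ⟨β₂, hβ₂⟩), (u, ⟨α₂, hα₂⟩), (v, ⟨α₃, hα₃⟩)], ?_, ?_⟩
  · have hu : u ∈ s(u, v) := Sym2.mem_mk_left u v
    have hv : v ∈ s(u, v) := Sym2.mem_mk_right u v
    rw [switchSeq_eq_foldl]
    simp only [List.foldl_cons, List.foldl_nil, stepAt, hu, hv, if_pos]
    rw [hij, hjk₂, hk₂, hk₂j]
  · intro e hne hej
    rw [switchSeq_eq_foldl]
    by_cases hu : u ∈ e <;> by_cases hv : v ∈ e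
    · exact absurd ((Sym2.mem_and_mem_iff huv).mp ⟨hu, hv⟩) hne
    · simp only [List.foldl_cons, List.foldl_nil, stepAt, hu, hv, if_pos, if_neg,
        not_false_iff]
      rw [hej, hdj]
    · simp only [List.foldl_cons, List.foldl_nil, stepAt, hu, hv, if_pos, if_neg,
        not_false_iff]
      rw [hej, hjk₂, hk₂j]
    · simp only [List.foldl_cons, List.foldl_nil, stepAt, hu, hv, if_neg,
        not_false_iff]
      exact hej

lemma allToJ
    (hT : ∀ i : Fin m, ∃ α β : Equiv.Perm (Fin m), α ∈ Γ ∧ β ∈ Γ ∧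
      ∃ k : Fin m, α i = j ∧ α k = k ∧ β j = k)
    (L : List (Sym2 V)) (σ : Sym2 V → Fin m) (hd : ∀ e ∈ L, ¬ e.IsDiag) :
    ∃ S : List (V × Γ), ∀ e ∈ L, switchSeq σ S e = j := by
  induction L generalizing σ with
  | nil => exact ⟨[], by simp⟩
  | cons e L ih =>
      obtain ⟨S', hS'⟩ := ih σ (fun f hf => hd f (List.mem_cons_of_mem _ hf))
      obtain ⟨⟨u, v⟩, rfl⟩ := Quot.exists_rep e
      have huv : u ≠ v := by
        have := hd _ List.mem_cons_self
        simpa [Sym2.mk_isDiag_iff] using this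
      obtain ⟨S₄, h₁, h₂⟩ := fourSwitch hT (switchSeq σ S') u v huv
      refine ⟨S' ++ S₄, ?_⟩
      intro f hf
      rw [switchSeq_append]
      rcases List.mem_cons.mp hf with hfe | hfL
      · rw [hfe]; exact h₁
      · by_cases hfe : f = s(u, v)
        · rw [hfe]; exact h₁
        · exact h₂ f hfe (hS' f hfL)

end Main

/-- if Γ ≤ S_m (m ≥ 3) has property T_j (i.e. T_{i,j} for every colour i),
then two (finite) m-edge-coloured graphs G₁, G₂ are Γ-switch equivalent (some
Γ-switching sequence transforms G₁ into a colour-preserving isomorphic copy of G₂)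
if and only if their underlying graphs are isomorphic. -/
theorem stmt13 {V : Type} [Fintype V] [DecidableEq V] (m : ℕ) (hm : 3 ≤ m)
    (Γ : Subgroup (Equiv.Perm (Fin m))) (j : Fin m)
    (hT : ∀ i : Fin m, ∃ α β : Equiv.Perm (Fin m), α ∈ Γ ∧ β ∈ Γ ∧
      ∃ k : Fin m, α i = j ∧ α k = k ∧ β j = k)
    (G₁ G₂ : SimpleGraph V) (σ₁ σ₂ : Sym2 V → Fin m) :
    (∃ (S : List (V × Γ)) (φ : G₁ ≃g G₂),
        ∀ e ∈ G₁.edgeSet, σ₂ (Sym2.map (fun v => φ v) e) = switchSeq σ₁ S e)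
    ↔ Nonempty (G₁ ≃g G₂) := by
  constructor
  · rintro ⟨S, φ, -⟩
    exact ⟨φ⟩
  · rintro ⟨φ⟩
    classical
    set L : List (Sym2 V) := (Set.toFinite G₁.edgeSet).toFinset.toList with hL
    have hmemL : ∀ e, e ∈ L ↔ e ∈ G₁.edgeSet := by
      intro e
      rw [hL, Finset.mem_toList, Set.Finite.mem_toFinset]
    have hdiag : ∀ e ∈ L, ¬ e.IsDiag := by
      intro e he
      exact G₁.not_isDiag_of_mem_edgeSet ((hmemL e).mp he)
    obtain ⟨S₁, hS₁⟩ := allToJ hT L σ₁ hdiag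
    obtain ⟨S₂, hS₂⟩ :=
      allToJ hT L (fun e => σ₂ (Sym2.map (fun v => φ v) e)) hdiag
    refine ⟨S₁ ++ invSeq S₂, φ, ?_⟩
    intro e he
    have heL : e ∈ L := (hmemL e).mpr he
    rw [switchSeq_append]
    have key : switchSeq σ₁ S₁ e
        = switchSeq (fun e => σ₂ (Sym2.map (fun v => φ v) e)) S₂ e := by
      rw [hS₁ e heL, hS₂ e heL]
    rw [switchSeq_congr key, switchSeq_invSeq]
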